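/- For every m ≥ 1 and every x ∈ ℝ^m, -∑_{i=1}^m ψ'(-x_i) x_i ≥ ‖x⁻‖₁ - m/2, where ‖x⁻‖₁ = ∑_{i=1}^m max(-x_i, 0). -/

import Mathlib

/-!
The inequality holds termwise: `ψ'(t) t ≥ max(t, 0) - 1/2` for every real `t`. This is clear
where `ψ' = 0` (`t ≤ -1`) and where `ψ' = 1` (`t ≥ 0`). On `[-1, 0]` the derivative is
increasing with `ψ' ≤ 1` and `ψ'(-1/2) = 1/2`, so `ψ'(t) t ≥ t ≥ -1/2` on `[-1/2, 0]` and
`ψ'(t) t ≥ t/2 ≥ -1/2` on `[-1, -1/2]`.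
-/

open scoped BigOperators

noncomputable section

/-- The piecewise function `ψ` from Definition 1 of the paper. -/
def psi (t : ℝ) : ℝ :=
  if t ≤ -1 then -(1/2)
  else if t ≤ 0 then (t+1)^3 - (1/2)*(t+1)^4 - 1/2
  else t

open Set

section Gluing

variable {F : Type*} [NormedAddCommGroup F] [NormedSpace ℝ F]

theorem HasDerivAt.of_eqOn_Iic_of_eqOn_Ici {f g h : ℝ → F} {f' : F} {a : ℝ}
    (hg : HasDerivAt g f' a) (hh : HasDerivAt h f' a)
    (hfg : EqOn f g (Iic a)) (hfh : EqOn f h (Ici a)) : HasDerivAt f f' a := by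
  have hglued := (hg.hasDerivWithinAt.congr hfg (hfg self_mem_Iic)).union
    (hh.hasDerivWithinAt.congr hfh (hfh self_mem_Ici))
  rwa [Iic_union_Ici, hasDerivWithinAt_univ] at hglued

theorem hasDerivAt_ite_le {g h g' h' : ℝ → F} {a : ℝ}
    (hg : ∀ t, HasDerivAt g (g' t) t) (hh : ∀ t, HasDerivAt h (h' t) t)
    (hval : g a = h a) (hderiv : g' a = h' a) (t : ℝ) :
    HasDerivAt (fun s ↦ if s ≤ a then g s else h s) (if t ≤ a then g' t else h' t) t := by
  rcases lt_trichotomy t a with ht | rfl | ht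
  · rw [if_pos ht.le]
    refine (hg t).congr_of_eventuallyEq ?_
    filter_upwards [Iic_mem_nhds ht] with s hs
    exact if_pos hs
  · rw [if_pos le_rfl]
    refine (hg t).of_eqOn_Iic_of_eqOn_Ici (hderiv ▸ hh t) (fun s hs ↦ if_pos hs) fun s hs ↦ ?_
    rcases (mem_Ici.mp hs).eq_or_lt with rfl | hlt
    · simp [hval]
    · exact if_neg hlt.not_ge
  · rw [if_neg ht.not_ge]
    refine (hh t).congr_of_eventuallyEq ?_
    filter_upwards [Ioi_mem_nhds ht] with s hs
    exact if_neg (not_le.mpr hs)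

end Gluing

def psiDeriv (t : ℝ) : ℝ :=
  if t ≤ -1 then 0
  else if t ≤ 0 then 3*(t+1)^2 - 2*(t+1)^3
  else 1

theorem hasDerivAt_psi (t : ℝ) : HasDerivAt psi (psiDeriv t) t := by
  have hpoly (s : ℝ) : HasDerivAt (fun s : ℝ ↦ (s+1)^3 - (1/2)*(s+1)^4 - 1/2)
      (3*(s+1)^2 - 2*(s+1)^3) s := by
    have hshift : HasDerivAt (fun s : ℝ ↦ s + 1) 1 s := (hasDerivAt_id s).add_const 1
    exact (((hshift.fun_pow 3).sub ((hshift.fun_pow 4).const_mul (1/2))).sub_const (1/2))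
      |>.congr_deriv (by push_cast; ring)
  have hright := hasDerivAt_ite_le hpoly hasDerivAt_id (a := 0) (by norm_num) (by norm_num)
  exact hasDerivAt_ite_le (fun s ↦ hasDerivAt_const s (-(1/2))) hright
    (by norm_num) (by norm_num) t

theorem deriv_psi : deriv psi = psiDeriv := funext fun t ↦ (hasDerivAt_psi t).deriv

theorem max_zero_sub_half_le_psiDeriv_mul (t : ℝ) : max t 0 - 1/2 ≤ psiDeriv t * t := by
  unfold psiDeriv
  split_ifs with h₁ h₀
  · rw [max_eq_right (by linarith)]
    norm_num
  · rw [max_eq_right h₀]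
    rcases le_total t (-1/2) with hhalf | hhalf
    · have hle : 3*(t+1)^2 - 2*(t+1)^3 ≤ 1/2 := by
        nlinarith [mul_nonneg (sub_nonneg.mpr hhalf) (sq_nonneg (t+1))]
      nlinarith
    · have hle : 3*(t+1)^2 - 2*(t+1)^3 ≤ 1 := by nlinarith [sq_nonneg t]
      nlinarith
  · rw [max_eq_left (by linarith), one_mul]
    linarith

theorem stmt_2_general (m : ℕ) (x : Fin m → ℝ) :
    (∑ i, max (-(x i)) 0) - (m : ℝ) / 2 ≤ -∑ i, deriv psi (-(x i)) * x i := by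
  calc (∑ i, max (-(x i)) 0) - (m : ℝ) / 2 = ∑ i, (max (-(x i)) 0 - 1/2) := by
        simp [Finset.sum_sub_distrib, div_eq_mul_inv]
    _ ≤ ∑ i, psiDeriv (-(x i)) * -(x i) :=
        Finset.sum_le_sum fun i _ ↦ max_zero_sub_half_le_psiDeriv_mul (-(x i))
    _ = -∑ i, deriv psi (-(x i)) * x i := by
        simp [deriv_psi, Finset.sum_neg_distrib]

/-- For every `m ≥ 1` and `x ∈ ℝ^m`, `-∑ i, ψ'(-x_i) x_i ≥ ‖x⁻‖₁ - m/2`. -/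
theorem stmt_2 (m : ℕ) (hm : 1 ≤ m) (x : Fin m → ℝ) :
    (∑ i, max (-(x i)) 0) - (m : ℝ) / 2 ≤ -∑ i, deriv psi (-(x i)) * x i :=
  stmt_2_general m x

end
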